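/- arXiv:1005.4715 — 5 statements merged into one kernel-verified Lean document; each statement's English description precedes it below -/
import Mathlib

section
/- Let a > 0, h ≠ 0, b ∈ ℝ, and N ∈ ℕ. Then (1/i)·[ Σ_{n=−N, n≠0}^{N} cot( −πnh i/a ) − Σ_{n=−N}^{N} cot( π(a/2 + (b − nh)i)/a ) ] = Σ_{n=−N}^{N} tanh( π(b+nh)/a ). Consequently, for every N, the N-street truncated conjugate velocity of the vortex at a/2 + ib equals that of the vortex at the origin. -/
/-!
The sum over the vortex's own street (the terms with `n ≠ 0` at the origin) vanishes because
`cot` is odd and the truncation `-N..N` is symmetric. Each term of a shifted street lies half a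
period off the real axis, where `cot (π/2 + i y) = -i tanh y`; the reflection `n ↦ -n` of the
truncation turns `b - n h` into `b + n h`.
-/

open Finset

namespace Complex

theorem cot_neg (z : ℂ) : cot (-z) = -cot z := by
  rw [cot_eq_cos_div_sin, cot_eq_cos_div_sin, cos_neg, sin_neg, div_neg]

theorem cot_pi_div_two_add (z : ℂ) : cot (Real.pi / 2 + z) = -tan z := by
  rw [cot_eq_cos_div_sin, cos_add, sin_add, cos_pi_div_two, sin_pi_div_two, tan]
  simp [neg_div]

theorem cot_pi_mul_half_add_mul_I_div {a : ℝ} (ha : a ≠ 0) (t : ℝ) :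
    cot (Real.pi * (a / 2 + t * I) / a) = -(Real.tanh (Real.pi * t / a) : ℂ) * I := by
  have harg : (Real.pi : ℂ) * (a / 2 + t * I) / a
      = Real.pi / 2 + ((Real.pi * t / a : ℝ) : ℂ) * I := by
    have ha' : (a : ℂ) ≠ 0 := ofReal_ne_zero.mpr ha
    push_cast
    field_simp
  rw [harg, cot_pi_div_two_add, tan_mul_I, ofReal_tanh]
  ring

end Complex

namespace Finset

theorem sum_erase_zero_eq_zero_of_odd {M : Type*} [AddCommGroup M] {s : Finset ℤ}
    (hs : ∀ n ∈ s, -n ∈ s) {f : ℤ → M} (hf : ∀ n, f (-n) = -f n) :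
    ∑ n ∈ s.erase 0, f n = 0 :=
  sum_involution (fun n _ ↦ -n) (fun n _ ↦ by rw [hf, add_neg_cancel])
    (fun n hn _ ↦ neg_ne_self.mpr (ne_of_mem_erase hn))
    (fun n hn ↦ mem_erase.mpr ⟨neg_ne_zero.mpr (ne_of_mem_erase hn), hs n (mem_of_mem_erase hn)⟩)
    (fun n _ ↦ neg_neg n)

theorem sum_Icc_neg_comp {M : Type*} [AddCommMonoid M] (N : ℤ) (f : ℤ → M) :
    ∑ n ∈ Icc (-N) N, f (-n) = ∑ n ∈ Icc (-N) N, f n := by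
  refine sum_nbij' (-·) (-·) (fun n hn ↦ ?_) (fun n hn ↦ ?_) (fun n _ ↦ neg_neg n)
    (fun n _ ↦ neg_neg n) (fun n _ ↦ rfl) <;>
  · rw [mem_Icc] at hn ⊢
    omega

end Finset

theorem truncated_velocity_half_general (a h b : ℝ) (ha : 0 < a) (N : ℕ) :
    (1 / Complex.I) *
      ((∑ n ∈ (Finset.Icc (-(N : ℤ)) (N : ℤ)).erase 0,
          Complex.cot (-(Real.pi : ℂ) * (n : ℂ) * (h : ℂ) * Complex.I / (a : ℂ))) -
        ∑ n ∈ Finset.Icc (-(N : ℤ)) (N : ℤ),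
          Complex.cot ((Real.pi : ℂ) * ((a : ℂ) / 2 + ((b : ℂ) - (n : ℂ) * (h : ℂ)) * Complex.I) / (a : ℂ))) =
    ∑ n ∈ Finset.Icc (-(N : ℤ)) (N : ℤ), ((Real.tanh (Real.pi * (b + n * h) / a) : ℝ) : ℂ) ∧
    (1 / Complex.I) *
      ((∑ n ∈ (Finset.Icc (-(N : ℤ)) (N : ℤ)).erase 0,
          Complex.cot (-(Real.pi : ℂ) * (n : ℂ) * (h : ℂ) * Complex.I / (a : ℂ))) -
        ∑ n ∈ Finset.Icc (-(N : ℤ)) (N : ℤ),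
          Complex.cot ((Real.pi : ℂ) * ((a : ℂ) / 2 + ((b : ℂ) - (n : ℂ) * (h : ℂ)) * Complex.I) / (a : ℂ))) =
    (1 / Complex.I) *
      ((∑ n ∈ Finset.Icc (-(N : ℤ)) (N : ℤ),
          Complex.cot ((Real.pi : ℂ) * (-(a : ℂ) / 2 - ((b : ℂ) + (n : ℂ) * (h : ℂ)) * Complex.I) / (a : ℂ))) -
        ∑ n ∈ (Finset.Icc (-(N : ℤ)) (N : ℤ)).erase 0,
          Complex.cot (-(Real.pi : ℂ) * (n : ℂ) * (h : ℂ) * Complex.I / (a : ℂ))) := by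
  set s : Finset ℤ := Icc (-(N : ℤ)) N
  have hself : ∑ n ∈ s.erase 0,
      Complex.cot (-(Real.pi : ℂ) * (n : ℂ) * (h : ℂ) * Complex.I / (a : ℂ)) = 0 :=
    sum_erase_zero_eq_zero_of_odd (fun n hn ↦ by rw [mem_Icc] at hn ⊢; omega) fun n ↦ by
      rw [← Complex.cot_neg]
      push_cast
      ring_nf
  have hright : ∑ n ∈ s,
      Complex.cot ((Real.pi : ℂ) * ((a : ℂ) / 2 + ((b : ℂ) - (n : ℂ) * (h : ℂ)) * Complex.I) / (a : ℂ))
      = -(∑ n ∈ s, ((Real.tanh (Real.pi * (b + n * h) / a) : ℝ) : ℂ)) * Complex.I := by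
    rw [← sum_Icc_neg_comp, neg_mul, sum_mul, ← sum_neg_distrib]
    refine sum_congr rfl fun n _ ↦ ?_
    rw [show (b : ℂ) - ((-n : ℤ) : ℂ) * h = ((b + n * h : ℝ) : ℂ) by push_cast; ring,
      Complex.cot_pi_mul_half_add_mul_I_div ha.ne', neg_mul]
  have hleft : ∑ n ∈ s,
      Complex.cot ((Real.pi : ℂ) * (-(a : ℂ) / 2 - ((b : ℂ) + (n : ℂ) * (h : ℂ)) * Complex.I) / (a : ℂ))
      = (∑ n ∈ s, ((Real.tanh (Real.pi * (b + n * h) / a) : ℝ) : ℂ)) * Complex.I := by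
    rw [sum_mul]
    refine sum_congr rfl fun n _ ↦ ?_
    rw [show (Real.pi : ℂ) * (-(a : ℂ) / 2 - ((b : ℂ) + n * h) * Complex.I) / a
        = -(Real.pi * (a / 2 + ((b + n * h : ℝ) : ℂ) * Complex.I) / a) by push_cast; ring,
      Complex.cot_neg, Complex.cot_pi_mul_half_add_mul_I_div ha.ne', neg_mul, neg_neg]
  rw [hself, hright, hleft]
  generalize ∑ n ∈ s, ((Real.tanh (Real.pi * (b + n * h) / a) : ℝ) : ℂ) = S
  constructor <;> field_simp <;> ring

/-- The N-street truncation of the conjugate velocity of the vortex at `a/2 + ib`,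
in cotangent closed form, equals the truncated street velocity sum of hyperbolic
tangents; consequently it equals the truncated conjugate velocity of the vortex at
the origin. -/
theorem truncated_velocity_half (a h b : ℝ) (ha : 0 < a) (hh : h ≠ 0) (N : ℕ) :
    (1 / Complex.I) *
      ((∑ n ∈ (Finset.Icc (-(N : ℤ)) (N : ℤ)).erase 0,
          Complex.cot (-(Real.pi : ℂ) * (n : ℂ) * (h : ℂ) * Complex.I / (a : ℂ))) -
        ∑ n ∈ Finset.Icc (-(N : ℤ)) (N : ℤ),
          Complex.cot ((Real.pi : ℂ) * ((a : ℂ) / 2 + ((b : ℂ) - (n : ℂ) * (h : ℂ)) * Complex.I) / (a : ℂ))) =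
    ∑ n ∈ Finset.Icc (-(N : ℤ)) (N : ℤ), ((Real.tanh (Real.pi * (b + n * h) / a) : ℝ) : ℂ) ∧
    (1 / Complex.I) *
      ((∑ n ∈ (Finset.Icc (-(N : ℤ)) (N : ℤ)).erase 0,
          Complex.cot (-(Real.pi : ℂ) * (n : ℂ) * (h : ℂ) * Complex.I / (a : ℂ))) -
        ∑ n ∈ Finset.Icc (-(N : ℤ)) (N : ℤ),
          Complex.cot ((Real.pi : ℂ) * ((a : ℂ) / 2 + ((b : ℂ) - (n : ℂ) * (h : ℂ)) * Complex.I) / (a : ℂ))) =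
    (1 / Complex.I) *
      ((∑ n ∈ Finset.Icc (-(N : ℤ)) (N : ℤ),
          Complex.cot ((Real.pi : ℂ) * (-(a : ℂ) / 2 - ((b : ℂ) + (n : ℂ) * (h : ℂ)) * Complex.I) / (a : ℂ))) -
        ∑ n ∈ (Finset.Icc (-(N : ℤ)) (N : ℤ)).erase 0,
          Complex.cot (-(Real.pi : ℂ) * (n : ℂ) * (h : ℂ) * Complex.I / (a : ℂ))) :=
  truncated_velocity_half_general a h b ha N
end

section
/- Let a > 0, h > 0, and b ∈ ℝ. Then: (i) the family n ↦ tanh(π(b+nh)/a) + tanh(π(b−nh)/a), indexed by integers n ≥ 1, is summable; and (ii) the symmetric partial sums Σ_{n=−N}^{N} tanh(π(b+nh)/a) converge as N → ∞ to tanh(πb/a) + Σ_{n=1}^{∞} [ tanh(π(b+nh)/a) + tanh(π(b−nh)/a) ]. In particular the street velocity U := lim_{N→∞} U_N, with U_N := (Γ/2a) Σ_{n=−N}^{N} tanh(π(b+nh)/a), exists for every Γ ∈ ℝ. -/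
/-!
Writing `c = πb/a` and `d = πh/a`, the pair `tanh (c + n d) + tanh (c - n d)` equals
`(tanh (c + n d) - 1) + (tanh (c - n d) + 1)`, and both brackets decay like `exp (-2 n d)`,
so the pairs form a geometrically dominated series. The symmetric sum over `Icc (-N) N` is
the `n = 0` term plus the first `N` pairs, hence converges to `tanh c` plus the series.
-/

open Filter Finset Real SummationFilter

theorem abs_tanh_sub_one_le (x : ℝ) : |tanh x - 1| ≤ 2 * exp (-(2 * x)) := by
  have hpos : 0 < exp x + exp (-x) := by positivity
  have hdiff : tanh x - 1 = -(2 * exp (-x)) / (exp x + exp (-x)) := by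
    rw [tanh_eq]; field_simp; ring
  calc |tanh x - 1| = 2 * exp (-x) / (exp x + exp (-x)) := by
        rw [hdiff, abs_div, abs_neg, abs_of_pos (by positivity), abs_of_pos hpos]
    _ ≤ 2 * exp (-x) / exp x :=
        div_le_div_of_nonneg_left (by positivity) (exp_pos x) (by linarith [exp_pos (-x)])
    _ = 2 * exp (-(2 * x)) := by rw [mul_div_assoc, ← exp_sub]; ring_nf

theorem abs_tanh_add_one_le (x : ℝ) : |tanh x + 1| ≤ 2 * exp (2 * x) := by
  calc |tanh x + 1| = |tanh (-x) - 1| := by rw [tanh_neg, ← abs_neg]; ring_nf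
    _ ≤ 2 * exp (2 * x) := by simpa using abs_tanh_sub_one_le (-x)

theorem abs_tanh_add_add_tanh_sub_le (c t : ℝ) :
    |tanh (c + t) + tanh (c - t)| ≤ 4 * cosh (2 * c) * exp (-(2 * t)) :=
  calc |tanh (c + t) + tanh (c - t)| ≤ |tanh (c + t) - 1| + |tanh (c - t) + 1| := by
        simpa only [sub_add_add_cancel] using abs_add_le (tanh (c + t) - 1) (tanh (c - t) + 1)
    _ ≤ 2 * exp (-(2 * (c + t))) + 2 * exp (2 * (c - t)) :=
        add_le_add (abs_tanh_sub_one_le _) (abs_tanh_add_one_le _)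
    _ = 4 * cosh (2 * c) * exp (-(2 * t)) := by
        rw [cosh_eq, show -(2 * (c + t)) = -(2 * c) + -(2 * t) by ring,
          show 2 * (c - t) = 2 * c + -(2 * t) by ring, exp_add, exp_add]
        ring

theorem summable_tanh_add_add_tanh_sub (c : ℝ) {d : ℝ} (hd : 0 < d) :
    Summable fun n : ℕ => tanh (c + n * d) + tanh (c - n * d) := by
  have hr : exp (-(2 * d)) < 1 := exp_lt_one_iff.2 (by linarith)
  refine Summable.of_norm_bounded
    ((summable_geometric_of_lt_one (exp_pos _).le hr).mul_left (4 * cosh (2 * c))) fun n => ?_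
  calc ‖tanh (c + n * d) + tanh (c - n * d)‖ ≤ 4 * cosh (2 * c) * exp (-(2 * (n * d))) :=
        abs_tanh_add_add_tanh_sub_le c _
    _ = 4 * cosh (2 * c) * exp (-(2 * d)) ^ n := by rw [← exp_nat_mul]; ring_nf

theorem Finset.sum_Icc_neg_eq_add_sum_range {G : Type*} [AddCommGroup G] (f : ℤ → G) (N : ℕ) :
    ∑ m ∈ Icc (-N : ℤ) N, f m = f 0 + ∑ n ∈ range N, (f (n + 1) + f (-(n + 1))) := by
  induction N with
  | zero => simp
  | succ N ih =>
    rw [Nat.cast_succ, sum_Icc_succ_eq_add_endpoints, ih, sum_range_succ]; abel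

theorem hasSum_symmetricIcc_of_hasSum_nat_add_neg_add_one {G : Type*} [AddCommGroup G]
    [TopologicalSpace G] [ContinuousAdd G] {f : ℤ → G} {a : G}
    (hf : HasSum (fun n : ℕ => f (n + 1) + f (-(n + 1))) a) :
    HasSum f (f 0 + a) (symmetricIcc ℤ) := by
  rw [hasSum_symmetricIcc_iff]
  simpa only [sum_Icc_neg_eq_add_sum_range] using hf.tendsto_sum_nat.const_add (f 0)

/-- Convergence of the street velocity of the infinite array: the paired tail terms
are summable, the symmetric partial sums of `tanh(π(b+nh)/a)` converge to
`tanh(πb/a)` plus the sum of the pairs, and in particular the street velocity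
`U = lim U_N` exists for every `Γ`. -/
theorem array_velocity_converges (a h b : ℝ) (ha : 0 < a) (hh : 0 < h) :
    Summable (fun n : ℕ =>
      Real.tanh (Real.pi * (b + (n + 1) * h) / a) +
        Real.tanh (Real.pi * (b - (n + 1) * h) / a)) ∧
    Tendsto
      (fun N : ℕ => ∑ n ∈ Finset.Icc (-(N : ℤ)) (N : ℤ), Real.tanh (Real.pi * (b + n * h) / a))
      atTop
      (nhds (Real.tanh (Real.pi * b / a) +
        ∑' n : ℕ, (Real.tanh (Real.pi * (b + (n + 1) * h) / a) +
          Real.tanh (Real.pi * (b - (n + 1) * h) / a)))) ∧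
    ∀ Γ : ℝ, ∃ U : ℝ,
      Tendsto
        (fun N : ℕ => (Γ / (2 * a)) *
          ∑ n ∈ Finset.Icc (-(N : ℤ)) (N : ℤ), Real.tanh (Real.pi * (b + n * h) / a))
        atTop (nhds U) := by
  have hd : 0 < π * h / a := by positivity
  have hpairs : Summable fun n : ℕ =>
      tanh (π * (b + (n + 1) * h) / a) + tanh (π * (b - (n + 1) * h) / a) := by
    refine ((summable_nat_add_iff 1).2 (summable_tanh_add_add_tanh_sub (π * b / a) hd)).congr
      fun n => ?_
    push_cast
    ring_nf
  have hsymm : HasSum (fun n : ℤ => tanh (π * (b + n * h) / a)) _ (symmetricIcc ℤ) :=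
    hasSum_symmetricIcc_of_hasSum_nat_add_neg_add_one
      (hpairs.hasSum.congr_fun fun n => by push_cast; ring_nf)
  have hlim := hasSum_symmetricIcc_iff.1 hsymm
  simp only [Int.cast_zero, zero_mul, add_zero] at hlim
  exact ⟨hpairs, hlim, fun Γ => ⟨_, hlim.const_mul (Γ / (2 * a))⟩⟩
end

section
/- Let a > 0, h > 0, b > 0, and Γ > 0. Then the sequence U_N := (Γ/2a) Σ_{n=−N}^{N} tanh(π(b+nh)/a) is strictly increasing in N, and its limit U = lim_{N→∞} U_N satisfies U > (Γ/2a)·tanh(πb/a); that is, the infinite array of streets translates strictly faster than a single isolated street. -/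
/-! Pairing the terms `n` and `-n`, with `α = πb/a` and `β = πh/a`,
`tanh (α + nβ) + tanh (α - nβ) = sinh 2α / (cosh (α + nβ) cosh (α - nβ))`,
which is positive because `b > 0` and is `O(exp (-2nβ))`. Hence the symmetric partial sums
increase strictly and converge, and the limit exceeds the `n = 0` term `tanh α`. -/

open Filter Finset Topology

section SymmetricSums

variable {M : Type*} [AddCommMonoid M]

theorem Finset.sum_Icc_neg_self (f : ℤ → M) (N : ℕ) :
    ∑ n ∈ Icc (-(N : ℤ)) N, f n = f 0 + ∑ m ∈ range N, (f (m + 1) + f (-(m + 1))) := by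
  induction N with
  | zero => simp
  | succ N ih =>
    have hIcc : Icc (-((N + 1 : ℕ) : ℤ)) (N + 1 : ℕ) =
        insert ((N : ℤ) + 1) (insert (-((N : ℤ) + 1)) (Icc (-(N : ℤ)) N)) := by
      ext x
      simp only [mem_Icc, mem_insert]
      omega
    rw [hIcc, sum_insert (by simp only [mem_insert, mem_Icc]; omega),
      sum_insert (by simp only [mem_Icc]; omega), ih, sum_range_succ]
    abel

theorem tendsto_sum_Icc_neg_self [TopologicalSpace M] [ContinuousAdd M] {f : ℤ → M} {s : M}
    (hs : HasSum (fun m : ℕ => f (m + 1) + f (-(m + 1))) s) :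
    Tendsto (fun N : ℕ => ∑ n ∈ Icc (-(N : ℤ)) N, f n) atTop (𝓝 (f 0 + s)) := by
  simpa only [sum_Icc_neg_self] using tendsto_const_nhds.add hs.tendsto_sum_nat

theorem strictMono_sum_Icc_neg_self [PartialOrder M] [IsOrderedCancelAddMonoid M] {f : ℤ → M}
    (hf : ∀ m : ℕ, 0 < f (m + 1) + f (-(m + 1))) :
    StrictMono fun N : ℕ => ∑ n ∈ Icc (-(N : ℤ)) N, f n := by
  refine strictMono_nat_of_lt_succ fun N => ?_
  simp only [sum_Icc_neg_self, sum_range_succ, ← add_assoc]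
  rw [add_assoc _ (f _)]
  exact lt_add_of_pos_right _ (hf N)

end SymmetricSums

namespace Real

theorem tanh_add_tanh (x y : ℝ) : tanh x + tanh y = sinh (x + y) / (cosh x * cosh y) := by
  have := (cosh_pos x).ne'
  have := (cosh_pos y).ne'
  rw [tanh_eq_sinh_div_cosh, tanh_eq_sinh_div_cosh, sinh_add]
  field_simp

theorem exp_div_two_le_cosh (x : ℝ) : exp x / 2 ≤ cosh x := by
  rw [cosh_eq]
  linarith [exp_pos (-x)]

theorem tanh_add_add_tanh_sub_pos {α : ℝ} (hα : 0 < α) (t : ℝ) :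
    0 < tanh (α + t) + tanh (α - t) := by
  rw [tanh_add_tanh]
  exact div_pos (sinh_pos_iff.2 (by linarith)) (mul_pos (cosh_pos _) (cosh_pos _))

theorem tanh_add_add_tanh_sub_le {α : ℝ} (hα : 0 ≤ α) (t : ℝ) :
    tanh (α + t) + tanh (α - t) ≤ 4 * sinh (2 * α) * exp (-(2 * t)) := by
  have hcosh : exp (2 * t) / 4 ≤ cosh (α + t) * cosh (α - t) := by
    calc exp (2 * t) / 4 = exp (α + t) / 2 * (exp (-(α - t)) / 2) := by
          rw [div_mul_div_comm, ← exp_add]; ring_nf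
      _ ≤ cosh (α + t) * cosh (α - t) := by
          rw [← cosh_neg (α - t)]
          gcongr <;> exact exp_div_two_le_cosh _
  rw [tanh_add_tanh, show α + t + (α - t) = 2 * α by ring, exp_neg]
  calc sinh (2 * α) / (cosh (α + t) * cosh (α - t))
      ≤ sinh (2 * α) / (exp (2 * t) / 4) :=
        div_le_div_of_nonneg_left (sinh_nonneg_iff.2 (by linarith)) (by positivity) hcosh
    _ = 4 * sinh (2 * α) * (exp (2 * t))⁻¹ := by ring

theorem summable_tanh_add_add_tanh_sub {α β : ℝ} (hα : 0 < α) (hβ : 0 < β) :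
    Summable fun m : ℕ => tanh (α + m * β) + tanh (α - m * β) := by
  have hr : exp (-(2 * β)) < 1 := exp_lt_one_iff.2 (by linarith)
  refine Summable.of_nonneg_of_le (fun m => (tanh_add_add_tanh_sub_pos hα _).le)
    (fun m => (tanh_add_add_tanh_sub_le hα.le _).trans_eq ?_)
    ((summable_geometric_of_lt_one (exp_pos _).le hr).mul_left (4 * sinh (2 * α)))
  rw [← exp_nat_mul]
  ring_nf

end Real

/-- For positive parameters, the truncated street velocities `U_N` are strictly
increasing in `N` and their limit exceeds the velocity of a single isolated street. -/
theorem array_faster_than_single_street (a h b Γ : ℝ)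
    (ha : 0 < a) (hh : 0 < h) (hb : 0 < b) (hΓ : 0 < Γ) :
    StrictMono (fun N : ℕ => (Γ / (2 * a)) *
      ∑ n ∈ Finset.Icc (-(N : ℤ)) (N : ℤ), Real.tanh (Real.pi * (b + n * h) / a)) ∧
    ∃ U : ℝ,
      Tendsto (fun N : ℕ => (Γ / (2 * a)) *
          ∑ n ∈ Finset.Icc (-(N : ℤ)) (N : ℤ), Real.tanh (Real.pi * (b + n * h) / a))
        atTop (nhds U) ∧
      (Γ / (2 * a)) * Real.tanh (Real.pi * b / a) < U := by
  set α := Real.pi * b / a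
  set β := Real.pi * h / a
  have hα : 0 < α := by positivity
  have hβ : 0 < β := by positivity
  have hc : 0 < Γ / (2 * a) := by positivity
  set f : ℤ → ℝ := fun n => Real.tanh (α + n * β) with hf
  have harg : ∀ n : ℤ, Real.pi * (b + n * h) / a = α + n * β := fun n => by ring
  have hpair : ∀ m : ℕ, f (m + 1) + f (-(m + 1)) =
      Real.tanh (α + (m + 1 : ℕ) * β) + Real.tanh (α - (m + 1 : ℕ) * β) :=
    fun m => by simp only [hf]; push_cast; ring_nf
  simp only [harg, ← hf]
  obtain ⟨s, hs⟩ := (summable_nat_add_iff 1).2 (Real.summable_tanh_add_add_tanh_sub hα hβ)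
  have hpos : ∀ m : ℕ, 0 < f (m + 1) + f (-(m + 1)) :=
    fun m => (hpair m).symm ▸ Real.tanh_add_add_tanh_sub_pos hα _
  simp only [← hpair] at hs
  refine ⟨(strictMono_sum_Icc_neg_self hpos).const_mul hc, _,
    (tendsto_sum_Icc_neg_self hs).const_mul _, mul_lt_mul_of_pos_left ?_ hc⟩
  have hf0 : f 0 = Real.tanh α := by simp [hf]
  rw [hf0]
  exact lt_add_of_pos_right _ ((hpos 0).trans_le (le_hasSum hs 0 fun m _ => (hpos m).le))
end

section
/- Let a > 0, b ∈ ℝ, Γ ∈ ℝ, and for h > 0 let U(h) := (Γ/2a)[ tanh(πb/a) + Σ_{n=1}^{∞} ( tanh(π(b+nh)/a) + tanh(π(b−nh)/a) ) ]. Then U(h) → (Γ/2a)·tanh(πb/a) as h → ∞; that is, as the separation between adjacent streets grows, the translational velocity of the infinite array converges to the translational velocity of a single isolated street. -/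
/-!
Since `tanh (v + u) + tanh (v - u) = sinh (2v) / (cosh (v + u) cosh (v - u))` and the
denominator is at least `exp (2u) / 4`, the `n`-th term of the series is bounded by
`4 |sinh (2πb/a)| exp (-2π(n+1)h/a)`. For `h ≥ 1` these bounds are dominated by a convergent
geometric series, and each term tends to `0`, so the whole series tends to `0` by Tannery's
theorem (dominated convergence for sums).
-/

open Filter Topology Real

namespace Real

theorem tanh_add_add_tanh_sub (v u : ℝ) :
    tanh (v + u) + tanh (v - u) = sinh (2 * v) / (cosh (v + u) * cosh (v - u)) := by
  rw [tanh_eq_sinh_div_cosh, tanh_eq_sinh_div_cosh,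
    div_add_div _ _ (cosh_pos _).ne' (cosh_pos _).ne', ← sinh_add, two_mul, add_add_sub_cancel]

theorem exp_two_mul_le_four_mul_cosh_add_mul_cosh_sub (v u : ℝ) :
    exp (2 * u) ≤ 4 * (cosh (v + u) * cosh (v - u)) := by
  have hprod : 2 * (cosh (v + u) * cosh (v - u)) = cosh (2 * v) + cosh (2 * u) := by
    have h₁ : cosh (2 * v) = cosh (v + u) * cosh (v - u) + sinh (v + u) * sinh (v - u) := by
      rw [← cosh_add]; ring_nf
    have h₂ : cosh (2 * u) = cosh (v + u) * cosh (v - u) - sinh (v + u) * sinh (v - u) := by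
      rw [← cosh_sub]; ring_nf
    linarith
  have hcosh : exp (2 * u) ≤ 2 * cosh (2 * u) := by
    rw [cosh_eq]; linarith [exp_pos (-(2 * u))]
  linarith [cosh_pos (2 * v)]

theorem abs_tanh_add_add_tanh_sub_le (v u : ℝ) :
    |tanh (v + u) + tanh (v - u)| ≤ 4 * |sinh (2 * v)| * exp (-(2 * u)) := by
  have hcosh : 0 < cosh (v + u) * cosh (v - u) := mul_pos (cosh_pos _) (cosh_pos _)
  rw [tanh_add_add_tanh_sub, abs_div, abs_of_pos hcosh, div_le_iff₀ hcosh, exp_neg]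
  calc |sinh (2 * v)| = |sinh (2 * v)| * (exp (2 * u))⁻¹ * exp (2 * u) := by
        field_simp
    _ ≤ |sinh (2 * v)| * (exp (2 * u))⁻¹ * (4 * (cosh (v + u) * cosh (v - u))) := by
        gcongr; exact exp_two_mul_le_four_mul_cosh_add_mul_cosh_sub v u
    _ = _ := by ring

theorem tendsto_tanh_add_add_tanh_sub_atTop (v : ℝ) :
    Tendsto (fun u => tanh (v + u) + tanh (v - u)) atTop (𝓝 0) := by
  have hbound : Tendsto (fun u => 4 * |sinh (2 * v)| * exp (-(2 * u))) atTop (𝓝 0) := by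
    simpa using (tendsto_exp_atBot.comp
      (tendsto_neg_atTop_atBot.comp (tendsto_id.const_mul_atTop two_pos))).const_mul
        (4 * |sinh (2 * v)|)
  exact squeeze_zero_norm (abs_tanh_add_add_tanh_sub_le v) hbound

theorem tendsto_tsum_tanh_add_add_tanh_sub_atTop (v : ℝ) :
    Tendsto (fun x : ℝ => ∑' n : ℕ, (tanh (v + (n + 1) * x) + tanh (v - (n + 1) * x)))
      atTop (𝓝 0) := by
  set C := 4 * |sinh (2 * v)|
  have hsum : Summable fun n : ℕ => C * exp (-(2 * ((n : ℝ) + 1))) := by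
    refine (summable_exp_nat_mul_iff.mpr (neg_lt_zero.mpr two_pos)).mul_left (C * exp (-2))
      |>.congr fun n => ?_
    rw [mul_assoc, ← exp_add]; ring_nf
  have hterm (n : ℕ) : Tendsto (fun x : ℝ => tanh (v + (n + 1) * x) + tanh (v - (n + 1) * x))
      atTop (𝓝 0) :=
    (tendsto_tanh_add_add_tanh_sub_atTop v).comp
      (tendsto_id.const_mul_atTop (by positivity))
  have hdom : ∀ᶠ x : ℝ in atTop, ∀ n : ℕ,
      ‖tanh (v + (n + 1) * x) + tanh (v - (n + 1) * x)‖ ≤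
        C * exp (-(2 * ((n : ℝ) + 1))) := by
    filter_upwards [eventually_ge_atTop 1] with x hx n
    refine (abs_tanh_add_add_tanh_sub_le v _).trans ?_
    gcongr
    nlinarith
  simpa using tendsto_tsum_of_dominated_convergence hsum hterm hdom

end Real

/-- As the separation `h` between adjacent streets grows, the translational velocity
of the infinite array converges to that of a single isolated street. -/
theorem array_velocity_tendsto_single_street (a b Γ : ℝ) (ha : 0 < a) :
    Tendsto
      (fun h : ℝ => (Γ / (2 * a)) * (Real.tanh (Real.pi * b / a) +
        ∑' n : ℕ, (Real.tanh (Real.pi * (b + (n + 1) * h) / a) +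
          Real.tanh (Real.pi * (b - (n + 1) * h) / a))))
      atTop
      (nhds ((Γ / (2 * a)) * Real.tanh (Real.pi * b / a))) := by
  have hscale : Tendsto (fun h : ℝ => π * h / a) atTop atTop :=
    (tendsto_id.const_mul_atTop pi_pos).atTop_div_const ha
  have hseries := (tendsto_tsum_tanh_add_add_tanh_sub_atTop (π * b / a)).comp hscale
  convert (hseries.const_add (tanh (π * b / a))).const_mul (Γ / (2 * a)) using 2 with h
  · congr 2
    exact tsum_congr fun n => by ring_nf
  · simp
end

section
/- lim_{N→∞} Σ_{n=−N}^{N} tanh(π(n + 1/2)) = 1. Consequently, for the infinite array of staggered streets with b = a/2 and h = a (the square lattice configuration), the symmetric-truncation street velocity U = lim_{N→∞} (Γ/2a) Σ_{n=−N}^{N} tanh(π(b+nh)/a) equals Γ/(2a), which is exactly the shift constant Γb/(ah) for these parameter values. -/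
/-!
Since `tanh` is odd, the terms `n` and `-n - 1` of `∑ tanh (π (n + 1/2))` cancel, so the sum
over `[-N, N]` collapses to its last term `tanh (π (N + 1/2))`, which tends to `1`.
For `b = a/2`, `h = a` the street sum is the same sum, since `π (a/2 + n a) / a = π (n + 1/2)`.
-/

open Filter Finset

theorem Finset.sum_Icc_neg_eq_of_map_neg_sub_one {M : Type*} [AddCommGroup M] (f : ℤ → M)
    (hf : ∀ n, f (-n - 1) = -f n) (N : ℕ) : ∑ n ∈ Icc (-(N : ℤ)) N, f n = f N := by
  induction N with
  | zero => simp
  | succ N ih =>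
    have hIcc : Icc (-((N + 1 : ℕ) : ℤ)) ((N + 1 : ℕ) : ℤ)
        = insert (-(N : ℤ) - 1) (insert ((N : ℤ) + 1) (Icc (-(N : ℤ)) N)) := by
      rw [insert_Icc_right_eq_Icc_add_one (by omega), insert_Icc_left_eq_Icc_sub_one (by omega)]
      push_cast
      ring_nf
    rw [hIcc, sum_insert (by simp; omega), sum_insert (by simp), ih, hf]
    push_cast
    abel

theorem Real.tanh_eq_one_sub_exp_div (x : ℝ) :
    tanh x = (1 - exp (-(2 * x))) / (1 + exp (-(2 * x))) := by
  have hexp : exp (-(2 * x)) * exp x = exp (-x) := by rw [← exp_add]; ring_nf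
  rw [tanh_eq, eq_comm, ← mul_div_mul_right _ _ (exp_pos x).ne', sub_mul, add_mul, hexp, one_mul]

theorem Real.tendsto_tanh_atTop : Tendsto tanh atTop (nhds 1) := by
  have hexp : Tendsto (fun x : ℝ => exp (-(2 * x))) atTop (nhds 0) :=
    tendsto_exp_neg_atTop_nhds_zero.comp (tendsto_id.const_mul_atTop two_pos)
  have hfrac := ((tendsto_const_nhds (x := (1 : ℝ))).sub hexp).div
    ((tendsto_const_nhds (x := (1 : ℝ))).add hexp) (by norm_num)
  rw [sub_zero, add_zero, div_one] at hfrac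
  exact hfrac.congr fun x => (tanh_eq_one_sub_exp_div x).symm

theorem tendsto_sum_Icc_tanh_pi_mul_add_half :
    Tendsto (fun N : ℕ => ∑ n ∈ Icc (-(N : ℤ)) N, Real.tanh (Real.pi * ((n : ℝ) + 1 / 2)))
      atTop (nhds 1) := by
  have htelescope (N : ℕ) : ∑ n ∈ Icc (-(N : ℤ)) N, Real.tanh (Real.pi * ((n : ℝ) + 1 / 2))
      = Real.tanh (Real.pi * ((N : ℝ) + 1 / 2)) := by
    refine sum_Icc_neg_eq_of_map_neg_sub_one _ (fun n => ?_) N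
    rw [← Real.tanh_neg]
    push_cast
    ring_nf
  simp only [htelescope]
  exact Real.tendsto_tanh_atTop.comp <| (tendsto_natCast_atTop_atTop.atTop_add
    tendsto_const_nhds).const_mul_atTop Real.pi_pos

/-- `lim_{N→∞} ∑_{n=-N}^{N} tanh(π(n+1/2)) = 1`. Consequently, for the square
(Abrikosov) lattice configuration `b = a/2`, `h = a`, the symmetric-truncation street
velocity equals `Γ/(2a)`, which is exactly the shift constant `Γb/(ah)` for these
parameter values. -/
theorem square_lattice_velocity :
    Tendsto
      (fun N : ℕ => ∑ n ∈ Finset.Icc (-(N : ℤ)) (N : ℤ), Real.tanh (Real.pi * ((n : ℝ) + 1 / 2)))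
      atTop (nhds 1) ∧
    ∀ Γ a : ℝ, 0 < a →
      Tendsto
        (fun N : ℕ => (Γ / (2 * a)) *
          ∑ n ∈ Finset.Icc (-(N : ℤ)) (N : ℤ), Real.tanh (Real.pi * (a / 2 + (n : ℝ) * a) / a))
        atTop (nhds (Γ / (2 * a))) ∧
      Γ / (2 * a) = Γ * (a / 2) / (a * a) := by
  refine ⟨tendsto_sum_Icc_tanh_pi_mul_add_half, fun Γ a ha => ⟨?_, by field_simp⟩⟩
  have hargument (n : ℤ) : Real.pi * (a / 2 + (n : ℝ) * a) / a = Real.pi * ((n : ℝ) + 1 / 2) := by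
    field_simp
    ring
  simpa only [hargument, mul_one] using tendsto_sum_Icc_tanh_pi_mul_add_half.const_mul (Γ / (2 * a))
end
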